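/- arXiv:1704.08011 — 8 statements merged into one kernel-verified Lean document; each statement's English description precedes it below -/
import Mathlib

section
/- If H : Δ → ℝ satisfies generalized Shannon additivity with parameter α > 0, then for all (p₁,p₂) ∈ Δ₂: (1 − 3·2^{−α})·H(p₁,p₂) + 2^{−α}·H(p₂,p₁) = H(1/2,1/2)·(1 − p₁^α − p₂^α). -/
open Real

/-- A finite stochastic vector: nonnegative entries summing to 1. -/
def IsStochastic (l : List ℝ) : Prop :=
  (∀ x ∈ l, 0 ≤ x) ∧ l.sum = 1

/-- Generalized Shannon additivity with parameter `α`: merging two adjacent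
components of a stochastic vector. Powers are real powers (`rpow`). -/
def GSA (α : ℝ) (H : List ℝ → ℝ) : Prop :=
  ∀ (l₁ l₂ : List ℝ) (a b : ℝ), IsStochastic (l₁ ++ a :: b :: l₂) → 0 < a + b →
    H (l₁ ++ a :: b :: l₂) =
      H (l₁ ++ (a + b) :: l₂) + (a + b) ^ α * H [a / (a + b), b / (a + b)]

theorem stmt_2 (α : ℝ) (hα : 0 < α) (H : List ℝ → ℝ) (hH : GSA α H)
    (p₁ p₂ : ℝ) (h₁ : 0 ≤ p₁) (h₂ : 0 ≤ p₂) (hsum : p₁ + p₂ = 1) :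
    (1 - 3 * (2 : ℝ) ^ (-α)) * H [p₁, p₂] + (2 : ℝ) ^ (-α) * H [p₂, p₁] =
      H [1/2, 1/2] * (1 - p₁ ^ α - p₂ ^ α) := by
  have h2α : (2 : ℝ) ^ (-α) = ((1:ℝ)/2) ^ α := by
    rw [one_div, Real.inv_rpow (by norm_num), Real.rpow_neg (by norm_num)]
  have hhalf : ((1:ℝ)/2) ^ α ≠ 1 :=
    ne_of_lt (Real.rpow_lt_one (by norm_num) (by norm_num) hα)
  have hz : (0:ℝ) ^ α = 0 := Real.zero_rpow hα.ne'
  have ho : (1:ℝ) ^ α = 1 := Real.one_rpow α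
  -- Edge case lemma: H [0,1] = 0
  have H01 : H [0, 1] = 0 := by
    have e1 := hH [] [1/2] 0 (1/2)
      ⟨fun x hx => by fin_cases hx <;> norm_num, by norm_num⟩ (by norm_num)
    have e2 := hH [0] [] (1/2) (1/2)
      ⟨fun x hx => by fin_cases hx <;> norm_num, by norm_num⟩ (by norm_num)
    norm_num at e1 e2
    have key : (((1:ℝ)/2) ^ α - 1) * H [0,1] = 0 := by
      rw [sub_mul, one_mul]; linarith
    rcases mul_eq_zero.mp key with h | h
    · exact absurd (by linarith : ((1:ℝ)/2) ^ α = 1) hhalf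
    · exact h
  -- Edge case lemma: H [1,0] = 0
  have H10 : H [1, 0] = 0 := by
    have e1 := hH [1/2] [] (1/2) 0
      ⟨fun x hx => by fin_cases hx <;> norm_num, by norm_num⟩ (by norm_num)
    have e2 := hH [] [0] (1/2) (1/2)
      ⟨fun x hx => by fin_cases hx <;> norm_num, by norm_num⟩ (by norm_num)
    norm_num at e1 e2
    have key : (((1:ℝ)/2) ^ α - 1) * H [1,0] = 0 := by
      rw [sub_mul, one_mul]; linarith
    rcases mul_eq_zero.mp key with h | h
    · exact absurd (by linarith : ((1:ℝ)/2) ^ α = 1) hhalf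
    · exact h
  rcases h₁.eq_or_lt with hp1 | hp1
  · -- p₁ = 0, p₂ = 1
    have : p₂ = 1 := by linarith
    subst this
    rw [← hp1, H01, H10, hz, ho]
    ring
  rcases h₂.eq_or_lt with hp2 | hp2
  · -- p₂ = 0, p₁ = 1
    have : p₁ = 1 := by linarith
    subst this
    rw [← hp2, H01, H10, hz, ho]
    ring
  -- General case: p₁ > 0, p₂ > 0
  have hs : p₁/2 + p₂/2 = 1/2 := by linarith
  have d1 : p₁/2 / (1/2 : ℝ) = p₁ := by ring
  have d2 : p₂/2 / (1/2 : ℝ) = p₂ := by ring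
  have e1 : H [p₁/2, p₂/2, p₁/2, p₂/2]
      = H [1/2, p₁/2, p₂/2] + ((1:ℝ)/2) ^ α * H [p₁, p₂] := by
    have h := hH [] [p₁/2, p₂/2] (p₁/2) (p₂/2)
      ⟨fun x hx => by fin_cases hx <;> linarith, by norm_num; linarith⟩
      (by rw [hs]; norm_num)
    rw [hs, d1, d2] at h
    exact h
  have e2 : H [1/2, p₁/2, p₂/2]
      = H [1/2, 1/2] + ((1:ℝ)/2) ^ α * H [p₁, p₂] := by
    have h := hH [1/2] [] (p₁/2) (p₂/2)
      ⟨fun x hx => by fin_cases hx <;> linarith, by norm_num; linarith⟩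
      (by rw [hs]; norm_num)
    rw [hs, d1, d2] at h
    exact h
  have e3 : H [p₁/2, p₂/2, p₁/2, p₂/2]
      = H [p₁/2, 1/2, p₂/2] + ((1:ℝ)/2) ^ α * H [p₂, p₁] := by
    have hs' : p₂/2 + p₁/2 = 1/2 := by linarith
    have h := hH [p₁/2] [p₂/2] (p₂/2) (p₁/2)
      ⟨fun x hx => by fin_cases hx <;> linarith, by norm_num; linarith⟩
      (by rw [hs']; norm_num)
    rw [hs', d1, d2] at h
    exact h
  have e4 : H [p₁/2, p₁/2, p₂/2, p₂/2]
      = H [p₁, p₂/2, p₂/2] + p₁ ^ α * H [1/2, 1/2] := by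
    have hs' : p₁/2 + p₁/2 = p₁ := by ring
    have dd : p₁/2 / p₁ = 1/2 := by field_simp
    have h := hH [] [p₂/2, p₂/2] (p₁/2) (p₁/2)
      ⟨fun x hx => by fin_cases hx <;> linarith, by norm_num; linarith⟩
      (by rw [hs']; exact hp1)
    rw [hs', dd] at h
    exact h
  have e5 : H [p₁, p₂/2, p₂/2]
      = H [p₁, p₂] + p₂ ^ α * H [1/2, 1/2] := by
    have hs' : p₂/2 + p₂/2 = p₂ := by ring
    have dd : p₂/2 / p₂ = 1/2 := by field_simp
    have h := hH [p₁] [] (p₂/2) (p₂/2)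
      ⟨fun x hx => by fin_cases hx <;> linarith, by norm_num; linarith⟩
      (by rw [hs']; exact hp2)
    rw [hs', dd] at h
    exact h
  have e6 : H [p₁/2, p₁/2, p₂/2, p₂/2]
      = H [p₁/2, 1/2, p₂/2] + ((1:ℝ)/2) ^ α * H [p₁, p₂] := by
    have h := hH [p₁/2] [p₂/2] (p₁/2) (p₂/2)
      ⟨fun x hx => by fin_cases hx <;> linarith, by norm_num; linarith⟩
      (by rw [hs]; norm_num)
    rw [hs, d1, d2] at h
    exact h
  rw [h2α]
  linear_combination e1 + e2 - e3 + e6 - e4 - e5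
end

section
/- If H : Δ → ℝ satisfies generalized Shannon additivity with parameter α = 1, then H(p₁,p₂) = H(p₂,p₁) for all (p₁,p₂) ∈ Δ₂. -/
open Real

/-!
Let `F = asymmetry H`, so `F(x) = H[x, 1-x] - H[1-x, x]`. Merging the entries of `(a, b, c)` and
of `(c, b, a)` in both possible orders gives a cocycle identity for `F`. From it, `F` is additive,
satisfies `(1 + t) F(t/(1+t)) = F(t)` and `F(p²) = 2p F(p)`, and by polarization `F` obeys the
Leibniz rule. With `s = t/(1+t)` one has `t = s + st`, and expanding `F(t)` by additivity and the
Leibniz rule leaves `s F(t) = 0`.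
-/

noncomputable def asymmetry (H : List ℝ → ℝ) (x : ℝ) : ℝ := H [x, 1 - x] - H [1 - x, x]

lemma isStochastic_triple {a b c : ℝ} (ha : 0 ≤ a) (hb : 0 ≤ b) (hc : 0 ≤ c)
    (h : a + b + c = 1) : IsStochastic [a, b, c] := by
  refine ⟨?_, by simpa [← add_assoc] using h⟩
  simp only [List.mem_cons, List.not_mem_nil, or_false]
  rintro x (rfl | rfl | rfl) <;> assumption

section
variable {H : List ℝ → ℝ}

lemma asymmetry_eq_of_add_eq_one {x y : ℝ} (h : x + y = 1) :
    asymmetry H x = H [x, y] - H [y, x] := by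
  obtain rfl : y = 1 - x := by linarith
  rfl

lemma asymmetry_div_eq {x y s : ℝ} (hs : x + y = s) (hs0 : s ≠ 0) :
    asymmetry H (x / s) = H [x / s, y / s] - H [y / s, x / s] :=
  asymmetry_eq_of_add_eq_one (by rw [← add_div, hs, div_self hs0])

lemma asymmetry_div_swap {x y s : ℝ} (hs : x + y = s) (hs0 : s ≠ 0) :
    asymmetry H (y / s) = -asymmetry H (x / s) := by
  rw [asymmetry_div_eq hs hs0, asymmetry_div_eq ((add_comm y x).trans hs) hs0]
  ring

lemma asymmetry_one_sub (x : ℝ) : asymmetry H (1 - x) = -asymmetry H x := by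
  simp only [asymmetry, sub_sub_cancel]
  ring

namespace GSA

theorem merge_left {α : ℝ} (hH : GSA α H) {a b c : ℝ} (ha : 0 ≤ a) (hb : 0 ≤ b)
    (hc : 0 ≤ c) (h : a + b + c = 1) (hab : 0 < a + b) :
    H [a, b, c] = H [a + b, c] + (a + b) ^ α * H [a / (a + b), b / (a + b)] := by
  simpa using hH [] [c] a b (isStochastic_triple ha hb hc h) hab

theorem merge_right {α : ℝ} (hH : GSA α H) {a b c : ℝ} (ha : 0 ≤ a) (hb : 0 ≤ b)
    (hc : 0 ≤ c) (h : a + b + c = 1) (hbc : 0 < b + c) :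
    H [a, b, c] = H [a, b + c] + (b + c) ^ α * H [b / (b + c), c / (b + c)] := by
  simpa using hH [a] [] b c (isStochastic_triple ha hb hc h) hbc

theorem asymmetry_cocycle (hH : GSA 1 H) {a b c : ℝ} (ha : 0 ≤ a) (hb : 0 ≤ b) (hc : 0 ≤ c)
    (h : a + b + c = 1) (hab : 0 < a + b) (hbc : 0 < b + c) :
    (a + b) * asymmetry H (a / (a + b)) + (b + c) * asymmetry H (c / (b + c)) =
      asymmetry H a + asymmetry H c := by
  have h' : c + b + a = 1 := by linarith
  have e₁ := hH.merge_left ha hb hc h hab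
  have e₂ := hH.merge_right ha hb hc h hbc
  have e₃ := hH.merge_left hc hb ha h' (by linarith)
  have e₄ := hH.merge_right hc hb ha h' (by linarith)
  simp only [rpow_one] at e₁ e₂ e₃ e₄
  rw [add_comm c b] at e₃
  rw [add_comm b a] at e₄
  have f_a := asymmetry_eq_of_add_eq_one (H := H) (x := a) (y := b + c) (by linarith)
  have f_c := asymmetry_eq_of_add_eq_one (H := H) (x := c) (y := a + b) (by linarith)
  have f_ab := asymmetry_div_eq (H := H) (rfl : a + b = a + b) hab.ne'
  have f_bc := asymmetry_div_eq (H := H) (add_comm c b) hbc.ne'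
  linear_combination (a + b) * f_ab + (b + c) * f_bc - f_a - f_c + e₂ - e₁ + e₄ - e₃

theorem asymmetry_add_add_eq_zero (hH : GSA 1 H) {a b c : ℝ} (ha : 0 < a) (hb : 0 < b)
    (hc : 0 < c) (h : a + b + c = 1) : asymmetry H a + asymmetry H b + asymmetry H c = 0 := by
  have k₁ := hH.asymmetry_cocycle ha.le hb.le hc.le h (by positivity) (by positivity)
  have k₂ := hH.asymmetry_cocycle ha.le hc.le hb.le (by linarith) (by positivity) (by positivity)
  have k₃ := hH.asymmetry_cocycle hb.le ha.le hc.le (by linarith) (by positivity) (by positivity)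
  rw [add_comm c b, asymmetry_div_swap (add_comm c b) (by positivity)] at k₂
  rw [add_comm b a, asymmetry_div_swap rfl (by positivity),
    asymmetry_div_swap rfl (by positivity)] at k₃
  linear_combination -(k₁ + k₂ + k₃) / 2

theorem asymmetry_add (hH : GSA 1 H) {x y : ℝ} (hx : 0 < x) (hy : 0 < y) (hxy : x + y < 1) :
    asymmetry H (x + y) = asymmetry H x + asymmetry H y := by
  have h := hH.asymmetry_add_add_eq_zero hx hy (c := 1 - (x + y)) (by linarith) (by ring)
  rw [asymmetry_one_sub] at h
  linarith

theorem asymmetry_zero (hH : GSA 1 H) : asymmetry H 0 = 0 := by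
  have h := hH.asymmetry_cocycle (a := 0) (b := 1 / 2) (c := 1 / 2) le_rfl (by norm_num)
    (by norm_num) (by norm_num) (by norm_num) (by norm_num)
  norm_num at h
  linarith

theorem one_add_mul_asymmetry_div (hH : GSA 1 H) {t : ℝ} (ht0 : 0 ≤ t) (ht1 : t ≤ 1) :
    (1 + t) * asymmetry H (t / (1 + t)) = asymmetry H t := by
  have hpos : 0 < 1 + t := by linarith
  have hsum : t / (1 + t) + (1 - t) / (1 + t) = 1 / (1 + t) := by field_simp; ring
  have hsum' : (1 - t) / (1 + t) + t / (1 + t) = 1 / (1 + t) := by rw [add_comm, hsum]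
  have k := hH.asymmetry_cocycle (a := t / (1 + t)) (b := (1 - t) / (1 + t)) (c := t / (1 + t))
    (by positivity) (div_nonneg (by linarith) hpos.le) (by positivity) (by field_simp; ring)
    (by rw [hsum]; positivity) (by rw [hsum']; positivity)
  rw [hsum, hsum', div_div_div_cancel_right₀ hpos.ne'] at k
  field_simp at k
  linarith

theorem asymmetry_sq (hH : GSA 1 H) {p : ℝ} (hp0 : 0 < p) (hp1 : p < 1) :
    asymmetry H (p ^ 2) = 2 * p * asymmetry H p := by
  have k := hH.asymmetry_cocycle (a := p ^ 2) (b := p * (1 - p)) (c := 1 - p) (by positivity)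
    (by nlinarith) (by linarith) (by ring) (by nlinarith) (by nlinarith)
  have hab : p ^ 2 + p * (1 - p) = p := by ring
  have hbc : p * (1 - p) + (1 - p) = (1 - p) * (1 + p) := by ring
  have hc : (1 - p) / ((1 - p) * (1 + p)) = 1 - p / (1 + p) := by
    field_simp [(by linarith : (1 - p) ≠ 0)]; ring
  rw [hab, hbc, hc, show p ^ 2 / p = p by field_simp] at k
  simp only [asymmetry_one_sub] at k
  linear_combination -k - (1 - p) * hH.one_add_mul_asymmetry_div hp0.le hp1.le

theorem asymmetry_mul (hH : GSA 1 H) {x y : ℝ} (hx : 0 < x) (hy : 0 < y) (hxy : x + y < 1) :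
    asymmetry H (x * y) = x * asymmetry H y + y * asymmetry H x := by
  have e := hH.asymmetry_sq (p := x + y) (by positivity) hxy
  rw [hH.asymmetry_add hx hy hxy, show (x + y) ^ 2 = x ^ 2 + (x * y + (x * y + y ^ 2)) by ring,
    hH.asymmetry_add (by positivity) (by positivity) (by nlinarith),
    hH.asymmetry_add (by positivity) (by positivity) (by nlinarith),
    hH.asymmetry_add (by positivity) (by positivity) (by nlinarith),
    hH.asymmetry_sq hx (by linarith), hH.asymmetry_sq hy (by linarith)] at e
  linear_combination e / 2

theorem asymmetry_eq_zero_of_le_half (hH : GSA 1 H) {t : ℝ} (ht0 : 0 ≤ t) (ht : t ≤ 1 / 2) :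
    asymmetry H t = 0 := by
  rcases ht0.eq_or_lt with rfl | ht0
  · exact hH.asymmetry_zero
  set s := t / (1 + t) with hs
  have hs0 : 0 < s := by positivity
  have hst : s < t := div_lt_self ht0 (by linarith)
  have hsplit : s + s * t = t := by rw [hs]; field_simp
  have hadd := hH.asymmetry_add hs0 (by positivity) (hsplit.trans_lt (by linarith))
  rw [hsplit, hH.asymmetry_mul hs0 ht0 (by linarith)] at hadd
  have hscale : (1 + t) * asymmetry H s = asymmetry H t :=
    hH.one_add_mul_asymmetry_div ht0.le (by linarith)
  have h : s * asymmetry H t = 0 := by linear_combination -hadd - hscale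
  exact (mul_eq_zero.mp h).resolve_left hs0.ne'

theorem asymmetry_eq_zero (hH : GSA 1 H) {p : ℝ} (h0 : 0 ≤ p) (h1 : p ≤ 1) :
    asymmetry H p = 0 := by
  rcases le_or_gt p (1 / 2) with hp | hp
  · exact hH.asymmetry_eq_zero_of_le_half h0 hp
  · rw [← sub_sub_cancel 1 p, asymmetry_one_sub, neg_eq_zero]
    exact hH.asymmetry_eq_zero_of_le_half (by linarith) (by linarith)

end GSA
end

theorem stmt_3 (H : List ℝ → ℝ) (hH : GSA 1 H)
    (p₁ p₂ : ℝ) (h₁ : 0 ≤ p₁) (h₂ : 0 ≤ p₂) (hsum : p₁ + p₂ = 1) :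
    H [p₁, p₂] = H [p₂, p₁] := by
  obtain rfl : p₂ = 1 - p₁ := by linarith
  exact sub_eq_zero.mp (hH.asymmetry_eq_zero h₁ (by linarith))
end

section
/- If H : Δ → ℝ satisfies generalized Shannon additivity with parameter α = 2, then H(p₁,p₂) + H(p₂,p₁) = 4·H(1/2,1/2)·(1 − p₁² − p₂²) for all (p₁,p₂) ∈ Δ₂. -/
open Real

lemma rpow2 (x : ℝ) : x ^ (2:ℝ) = x ^ 2 := by
  rw [show ((2:ℝ)) = ((2:ℕ):ℝ) by norm_num, Real.rpow_natCast]

theorem stmt_4 (H : List ℝ → ℝ) (hH : GSA 2 H)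
    (p₁ p₂ : ℝ) (h₁ : 0 ≤ p₁) (h₂ : 0 ≤ p₂) (hsum : p₁ + p₂ = 1) :
    H [p₁, p₂] + H [p₂, p₁] = 4 * H [1/2, 1/2] * (1 - p₁ ^ 2 - p₂ ^ 2) := by
  -- edge lemmas
  have H01 : H [0, 1] = 0 := by
    have ha := hH [] [(1:ℝ)/2] 0 (1/2)
      ⟨by intro x hx; simp only [List.nil_append, List.cons_append, List.append_nil, List.mem_cons, List.not_mem_nil, or_false] at hx; rcases hx with rfl|rfl|rfl <;> norm_num, by norm_num⟩
      (by norm_num)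
    have hb := hH [(0:ℝ)] [] (1/2) (1/2)
      ⟨by intro x hx; simp only [List.nil_append, List.cons_append, List.append_nil, List.mem_cons, List.not_mem_nil, or_false] at hx; rcases hx with rfl|rfl|rfl <;> norm_num, by norm_num⟩
      (by norm_num)
    simp only [List.nil_append, List.cons_append, List.append_nil] at ha hb
    norm_num [rpow2] at ha hb
    linarith
  have H10 : H [1, 0] = 0 := by
    have ha := hH [(1:ℝ)/2] [] (1/2) 0
      ⟨by intro x hx; simp only [List.nil_append, List.cons_append, List.append_nil, List.mem_cons, List.not_mem_nil, or_false] at hx; rcases hx with rfl|rfl|rfl <;> norm_num, by norm_num⟩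
      (by norm_num)
    have hb := hH [] [(0:ℝ)] (1/2) (1/2)
      ⟨by intro x hx; simp only [List.nil_append, List.cons_append, List.append_nil, List.mem_cons, List.not_mem_nil, or_false] at hx; rcases hx with rfl|rfl|rfl <;> norm_num, by norm_num⟩
      (by norm_num)
    simp only [List.nil_append, List.cons_append, List.append_nil] at ha hb
    norm_num [rpow2] at ha hb
    linarith
  rcases eq_or_lt_of_le h₁ with h1 | h1
  · have hp2 : p₂ = 1 := by linarith
    subst hp2; rw [← h1]; norm_num [H01, H10]
  rcases eq_or_lt_of_le h₂ with h2 | h2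
  · have hp1 : p₁ = 1 := by linarith
    subst hp1; rw [← h2]; norm_num [H01, H10]
  -- generic case: p₁ > 0, p₂ > 0
  have hne1 : p₁ ≠ 0 := ne_of_gt h1
  have hne2 : p₂ ≠ 0 := ne_of_gt h2
  have memA : ∀ x ∈ [p₁/2, p₁/2, p₂/2, p₂/2], (0:ℝ) ≤ x := by
    intro x hx; simp only [List.nil_append, List.cons_append, List.append_nil, List.mem_cons, List.not_mem_nil, or_false] at hx; rcases hx with rfl|rfl|rfl|rfl <;> linarith
  have memB : ∀ x ∈ [p₁/2, p₂/2, p₁/2, p₂/2], (0:ℝ) ≤ x := by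
    intro x hx; simp only [List.nil_append, List.cons_append, List.append_nil, List.mem_cons, List.not_mem_nil, or_false] at hx; rcases hx with rfl|rfl|rfl|rfl <;> linarith
  have stA : IsStochastic [p₁/2, p₁/2, p₂/2, p₂/2] := ⟨memA, by simp; linarith⟩
  have stB : IsStochastic [p₁/2, p₂/2, p₁/2, p₂/2] := ⟨memB, by simp; linarith⟩
  -- e1a : merge first two of A
  have e1a := hH [] [p₂/2, p₂/2] (p₁/2) (p₁/2) stA (by linarith)
  have e1b := hH [p₁] [] (p₂/2) (p₂/2)
    ⟨by intro x hx; simp only [List.nil_append, List.cons_append, List.append_nil, List.mem_cons, List.not_mem_nil, or_false] at hx; rcases hx with rfl|rfl|rfl <;> linarith,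
     by simp; linarith⟩ (by linarith)
  have e2 := hH [p₁/2] [p₂/2] (p₁/2) (p₂/2) stA (by linarith)
  have e3 := hH [] [p₁/2, p₂/2] (p₁/2) (p₂/2) stB (by linarith)
  have e4 := hH [(1:ℝ)/2] [] (p₁/2) (p₂/2)
    ⟨by intro x hx; simp only [List.nil_append, List.cons_append, List.append_nil, List.mem_cons, List.not_mem_nil, or_false] at hx; rcases hx with rfl|rfl|rfl <;> linarith,
     by simp; linarith⟩ (by linarith)
  have e5 := hH [p₁/2] [p₂/2] (p₂/2) (p₁/2) stB (by linarith)
  simp only [List.nil_append, List.cons_append, List.append_nil] at e1a e1b e2 e3 e4 e5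
  have hhalf : p₁/2 + p₂/2 = 1/2 := by linarith
  have hq1 : p₁/2 + p₁/2 = p₁ := by ring
  have hq2 : p₂/2 + p₂/2 = p₂ := by ring
  rw [hq1] at e1a
  rw [hq2] at e1b
  rw [hhalf] at e2 e3 e4
  rw [show p₂/2 + p₁/2 = 1/2 by linarith] at e5
  rw [show p₁/2/p₁ = 1/2 by field_simp] at e1a
  rw [show p₂/2/p₂ = 1/2 by field_simp] at e1b
  rw [show p₁/2/(1/2:ℝ) = p₁ by ring, show p₂/2/(1/2:ℝ) = p₂ by ring] at e2 e3 e4 e5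
  rw [rpow2] at e1a e1b e2 e3 e4 e5
  norm_num at e1a e1b e2 e3 e4 e5
  linear_combination (-4)*e1a + (-4)*e1b + 4*e2 + 4*e3 + 4*e4 - 4*e5
end

section
/- If H : Δ → ℝ satisfies generalized Shannon additivity with parameter α = 1, then H is permutation-invariant: for every n, every (p₁,...,pₙ) ∈ Δₙ, and every permutation π of {1,...,n}, H(p₁,...,pₙ) = H(p_{π(1)},...,p_{π(n)}). -/
open Real

/-!
Write `S a b = (a + b) * H [a / (a + b), b / (a + b)]` for the cost of splitting a mass `a + b`
into `a` and `b`; additivity with `α = 1` says that merging the adjacent entries `a, b` lowers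
`H` by exactly `S a b`, and `S` is homogeneous of degree one. Merging `[x, y, z]` in its two
possible orders shows that `S` is a 2-cocycle on `ℝ≥0`, so its antisymmetric part
`A x y = S x y - S y x` is additive in the first variable. Then `A (2x) (2y) = 4 A x y` by
additivity, while `A (2x) (2y) = 2 A x y` by homogeneity, so `A = 0`: swapping two adjacent
entries does not change `H`, and adjacent swaps generate all permutations.
-/

noncomputable def splitEntropy (H : List ℝ → ℝ) (a b : ℝ) : ℝ :=
  (a + b) * H [a / (a + b), b / (a + b)]

lemma IsStochastic.perm {l l' : List ℝ} (h : IsStochastic l) (hp : l.Perm l') :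
    IsStochastic l' :=
  ⟨fun x hx => h.1 x (hp.mem_iff.mpr hx), hp.sum_eq ▸ h.2⟩

lemma isStochastic_triple_s5 {x y z : ℝ} (hx : 0 ≤ x) (hy : 0 ≤ y) (hz : 0 ≤ z)
    (hsum : x + y + z = 1) : IsStochastic [x, y, z] := by
  refine ⟨?_, by simpa [add_assoc] using hsum⟩
  simp only [List.mem_cons, List.not_mem_nil, or_false]
  rintro w (rfl | rfl | rfl) <;> assumption

section splitEntropy

variable {H : List ℝ → ℝ}

lemma splitEntropy_of_add_eq_one {a b : ℝ} (h : a + b = 1) : splitEntropy H a b = H [a, b] := by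
  simp [splitEntropy, h]

lemma splitEntropy_mul {t : ℝ} (ht : t ≠ 0) (a b : ℝ) :
    splitEntropy H (t * a) (t * b) = t * splitEntropy H a b := by
  simp only [splitEntropy, ← mul_add, mul_div_mul_left _ _ ht]
  ring

lemma GSA.merge (hH : GSA 1 H) {l₁ l₂ : List ℝ} {a b : ℝ}
    (hs : IsStochastic (l₁ ++ a :: b :: l₂)) (hab : 0 < a + b) :
    H (l₁ ++ a :: b :: l₂) = H (l₁ ++ (a + b) :: l₂) + splitEntropy H a b := by
  simpa [splitEntropy] using hH l₁ l₂ a b hs hab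

variable (hH : GSA 1 H)
include hH

lemma GSA.splitEntropy_cocycle_of_sum_eq_one {x y z : ℝ}
    (hx : 0 ≤ x) (hy : 0 ≤ y) (hz : 0 ≤ z) (hsum : x + y + z = 1)
    (hxy : 0 < x + y) (hyz : 0 < y + z) :
    splitEntropy H x y + splitEntropy H (x + y) z =
      splitEntropy H x (y + z) + splitEntropy H y z := by
  have hs := isStochastic_triple_s5 hx hy hz hsum
  have merge_xy := hH.merge (l₁ := []) (l₂ := [z]) hs hxy
  have merge_yz := hH.merge (l₁ := [x]) (l₂ := []) hs hyz
  simp only [List.nil_append, List.cons_append] at merge_xy merge_yz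
  rw [splitEntropy_of_add_eq_one hsum,
    splitEntropy_of_add_eq_one (a := x) (b := y + z) (by linarith)]
  linarith

lemma GSA.splitEntropy_cocycle {x y z : ℝ} (hx : 0 ≤ x) (hy : 0 ≤ y) (hz : 0 ≤ z)
    (hxy : 0 < x + y) (hyz : 0 < y + z) :
    splitEntropy H x y + splitEntropy H (x + y) z =
      splitEntropy H x (y + z) + splitEntropy H y z := by
  set s := x + y + z
  have hs : 0 < s := by positivity
  have hs' : s⁻¹ ≠ 0 := inv_ne_zero hs.ne'
  have h := hH.splitEntropy_cocycle_of_sum_eq_one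
    (x := s⁻¹ * x) (y := s⁻¹ * y) (z := s⁻¹ * z)
    (by positivity) (by positivity) (by positivity)
    (by rw [← mul_add, ← mul_add, inv_mul_cancel₀ hs.ne'])
    (by rw [← mul_add]; positivity) (by rw [← mul_add]; positivity)
  rw [← mul_add, ← mul_add] at h
  simp only [splitEntropy_mul hs', ← mul_add] at h
  exact mul_left_cancel₀ hs' h

lemma GSA.splitEntropy_antisymm_add_left {x y z : ℝ} (hx : 0 ≤ x) (hy : 0 ≤ y)
    (hxy : 0 < x + y) (hz : 0 < z) :
    splitEntropy H (x + y) z - splitEntropy H z (x + y) =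
      (splitEntropy H x z - splitEntropy H z x) + (splitEntropy H y z - splitEntropy H z y) := by
  have hxyz := hH.splitEntropy_cocycle hx hy hz.le hxy (by linarith)
  have hzxy := hH.splitEntropy_cocycle hz.le hx hy (by linarith) hxy
  have hxzy := hH.splitEntropy_cocycle hx hz.le hy (by linarith) (by linarith)
  rw [add_comm z y] at hxzy
  rw [add_comm z x] at hzxy
  linarith

lemma GSA.splitEntropy_comm_of_pos {x y : ℝ} (hx : 0 ≤ x) (hy : 0 < y) :
    splitEntropy H x y = splitEntropy H y x := by
  rcases hx.eq_or_lt with rfl | hx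
  · have h := hH.splitEntropy_antisymm_add_left hy.le le_rfl (by linarith) hy
    simp only [add_zero, sub_self, zero_add] at h
    linarith
  · have h2x := hH.splitEntropy_antisymm_add_left hx.le hx.le (by linarith)
      (by linarith : 0 < 2 * y)
    have h2y := hH.splitEntropy_antisymm_add_left hy.le hy.le (by linarith) hx
    have hxy := splitEntropy_mul (H := H) two_ne_zero x y
    have hyx := splitEntropy_mul (H := H) two_ne_zero y x
    rw [two_mul x, two_mul y] at hxy hyx
    rw [two_mul y] at h2x
    linarith

lemma GSA.splitEntropy_comm {x y : ℝ} (hx : 0 ≤ x) (hy : 0 ≤ y) :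
    splitEntropy H x y = splitEntropy H y x := by
  rcases hy.eq_or_lt with rfl | hy
  · rcases hx.eq_or_lt with rfl | hx
    · rfl
    · exact (hH.splitEntropy_comm_of_pos le_rfl hx).symm
  · exact hH.splitEntropy_comm_of_pos hx hy

lemma GSA.swap {l₁ l₂ : List ℝ} {a b : ℝ} (hs : IsStochastic (l₁ ++ a :: b :: l₂)) :
    H (l₁ ++ a :: b :: l₂) = H (l₁ ++ b :: a :: l₂) := by
  have ha : 0 ≤ a := hs.1 a (by simp)
  have hb : 0 ≤ b := hs.1 b (by simp)
  rcases (add_nonneg ha hb).eq_or_lt with hab | hab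
  · obtain rfl : a = 0 := by linarith
    obtain rfl : b = 0 := by linarith
    rfl
  · have hs' := hs.perm ((List.Perm.swap b a l₂).append_left l₁)
    rw [hH.merge hs hab, hH.merge hs' (by linarith), add_comm b a, hH.splitEntropy_comm ha hb]

lemma GSA.append_perm {l l' : List ℝ} (hp : l.Perm l') :
    ∀ l₀ : List ℝ, IsStochastic (l₀ ++ l) → H (l₀ ++ l) = H (l₀ ++ l') := by
  induction hp with
  | nil => intro _ _; rfl
  | cons x _ ih =>
      intro l₀ hs
      simpa using ih (l₀ ++ [x]) (by simpa using hs)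
  | swap x y l => intro l₀ hs; exact hH.swap hs
  | trans p₁ _ ih₁ ih₂ =>
      intro l₀ hs
      rw [ih₁ l₀ hs, ih₂ l₀ (hs.perm (p₁.append_left l₀))]

end splitEntropy

theorem stmt_5 (H : List ℝ → ℝ) (hH : GSA 1 H)
    (l l' : List ℝ) (hl : IsStochastic l) (hperm : l.Perm l') :
    H l = H l' :=
  hH.append_perm hperm [] hl
end

section
/- If H : Δ → ℝ satisfies generalized Shannon additivity with parameter α > 0, α ≠ 1, α ≠ 2, then H(p₁,p₂) = H(1/2,1/2)·(1 − p₁^α − p₂^α)/(1 − 2^{1−α}) for all (p₁,p₂) ∈ Δ₂. -/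
open Real

/-!
Write `c = (½)^α`. Merging the cells of `(p/2, p/2, q/2, q/2)` and of `(p/2, q/2, p/2, q/2)` in
two orders each gives `H(p,q) (1 - 3c) + c H(q,p) = H(½,½) (1 - p^α - q^α)`. The right side is
symmetric in `p, q`, so subtracting the swapped identity leaves `(1 - 4c) (H(p,q) - H(q,p)) = 0`;
as `α ≠ 2`, `H` is symmetric on `Δ₂`, and the identity becomes
`H(p,q) (1 - 2^(1-α)) = H(½,½) (1 - p^α - q^α)`, where `1 - 2^(1-α) ≠ 0` as `α ≠ 1`.
At the boundary, merging `(0, ½, ½)` and `(½, ½, 0)` both ways shows `H(0,1) = H(1,0) = 0`.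
-/

namespace GSA

variable {α : ℝ} {H : List ℝ → ℝ}

theorem grouping (hH : GSA α H) {l₁ l₂ : List ℝ} {a b s u v : ℝ}
    (hl : IsStochastic (l₁ ++ a :: b :: l₂)) (hs : 0 < s) (huv : u + v = 1)
    (ha : a = s * u) (hb : b = s * v) :
    H (l₁ ++ a :: b :: l₂) = H (l₁ ++ s :: l₂) + s ^ α * H [u, v] := by
  have hab : a + b = s := by rw [ha, hb, ← mul_add, huv, mul_one]
  rw [hH l₁ l₂ a b hl (hab ▸ hs), hab, ha, hb, mul_div_cancel_left₀ _ hs.ne',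
    mul_div_cancel_left₀ _ hs.ne']

theorem pair_zero_one (hH : GSA α H) (hα : 0 < α) : H [0, 1] = 0 := by
  have hl : IsStochastic [0, 1/2, 1/2] := ⟨by norm_num, by norm_num⟩
  have hleft : H [0, 1/2, 1/2] = H [1/2, 1/2] + (1/2) ^ α * H [0, 1] :=
    hH.grouping (l₁ := []) hl one_half_pos (by norm_num) (by ring) (by ring)
  have hright : H [0, 1/2, 1/2] = H [0, 1] + 1 ^ α * H [1/2, 1/2] :=
    hH.grouping (l₁ := [0]) (l₂ := []) hl one_pos (by norm_num) (by ring) (by ring)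
  have hlt : ((1:ℝ) / 2) ^ α < 1 := rpow_lt_one (by norm_num) (by norm_num) hα
  rw [one_rpow, one_mul] at hright
  have h : (1 - (1/2) ^ α) * H [0, 1] = 0 := by linarith
  exact (mul_eq_zero.mp h).resolve_left (sub_ne_zero.mpr hlt.ne')

theorem pair_one_zero (hH : GSA α H) (hα : 0 < α) : H [1, 0] = 0 := by
  have hl : IsStochastic [1/2, 1/2, 0] := ⟨by norm_num, by norm_num⟩
  have hleft : H [1/2, 1/2, 0] = H [1, 0] + 1 ^ α * H [1/2, 1/2] :=
    hH.grouping (l₁ := []) hl one_pos (by norm_num) (by ring) (by ring)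
  have hright : H [1/2, 1/2, 0] = H [1/2, 1/2] + (1/2) ^ α * H [1, 0] :=
    hH.grouping (l₁ := [1/2]) (l₂ := []) hl one_half_pos (by norm_num) (by ring) (by ring)
  have hlt : ((1:ℝ) / 2) ^ α < 1 := rpow_lt_one (by norm_num) (by norm_num) hα
  rw [one_rpow, one_mul] at hleft
  have h : (1 - (1/2) ^ α) * H [1, 0] = 0 := by linarith
  exact (mul_eq_zero.mp h).resolve_left (sub_ne_zero.mpr hlt.ne')

theorem four_cell_identity (hH : GSA α H) {p q : ℝ} (hp : 0 < p) (hq : 0 < q)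
    (hpq : p + q = 1) :
    H [p, q] * (1 - 3 * (1/2) ^ α) + (1/2) ^ α * H [q, p] =
      H [1/2, 1/2] * (1 - p ^ α - q ^ α) := by
  have hV₁ : IsStochastic [p/2, p/2, q/2, q/2] :=
    ⟨by simp [div_nonneg, hp.le, hq.le], by simp only [List.sum_cons, List.sum_nil]; linarith⟩
  have hV₂ : IsStochastic [p/2, q/2, p/2, q/2] :=
    ⟨by simp [div_nonneg, hp.le, hq.le], by simp only [List.sum_cons, List.sum_nil]; linarith⟩
  have hW₁ : IsStochastic [p, q/2, q/2] :=
    ⟨by simp [div_nonneg, hp.le, hq.le], by simp only [List.sum_cons, List.sum_nil]; linarith⟩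
  have hW₂ : IsStochastic [1/2, p/2, q/2] :=
    ⟨by simp [div_nonneg, hp.le, hq.le], by simp only [List.sum_cons, List.sum_nil]; linarith⟩
  have e₁ : H [p/2, p/2, q/2, q/2] = H [p, q/2, q/2] + p ^ α * H [1/2, 1/2] :=
    hH.grouping (l₁ := []) hV₁ hp (by norm_num) (by ring) (by ring)
  have e₂ : H [p, q/2, q/2] = H [p, q] + q ^ α * H [1/2, 1/2] :=
    hH.grouping (l₁ := [p]) (l₂ := []) hW₁ hq (by norm_num) (by ring) (by ring)
  have e₃ : H [p/2, p/2, q/2, q/2] = H [p/2, 1/2, q/2] + (1/2) ^ α * H [p, q] :=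
    hH.grouping (l₁ := [p/2]) hV₁ one_half_pos hpq (by ring) (by ring)
  have e₄ : H [p/2, q/2, p/2, q/2] = H [p/2, 1/2, q/2] + (1/2) ^ α * H [q, p] :=
    hH.grouping (l₁ := [p/2]) hV₂ one_half_pos (by linarith) (by ring) (by ring)
  have e₅ : H [p/2, q/2, p/2, q/2] = H [1/2, p/2, q/2] + (1/2) ^ α * H [p, q] :=
    hH.grouping (l₁ := []) hV₂ one_half_pos hpq (by ring) (by ring)
  have e₆ : H [1/2, p/2, q/2] = H [1/2, 1/2] + (1/2) ^ α * H [p, q] :=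
    hH.grouping (l₁ := [1/2]) (l₂ := []) hW₂ one_half_pos hpq (by ring) (by ring)
  linear_combination e₃ - e₁ - e₂ - e₄ + e₅ + e₆

theorem pair_comm (hH : GSA α H) (hα2 : α ≠ 2) {p q : ℝ} (hp : 0 < p) (hq : 0 < q)
    (hpq : p + q = 1) : H [p, q] = H [q, p] := by
  have hc : 1 - 4 * (1/2 : ℝ) ^ α ≠ 0 := by
    intro h
    have : (1/2 : ℝ) ^ α = (1/2) ^ (2 : ℝ) := by rw [rpow_two]; linarith
    exact hα2 ((rpow_right_inj (by norm_num) (by norm_num)).mp this)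
  have h := hH.four_cell_identity hp hq hpq
  have h' := hH.four_cell_identity hq hp (by linarith)
  have : (1 - 4 * (1/2) ^ α) * (H [p, q] - H [q, p]) = 0 := by linear_combination h - h'
  exact sub_eq_zero.mp ((mul_eq_zero.mp this).resolve_left hc)

theorem mul_one_sub_two_rpow (hH : GSA α H) (hα : 0 < α) (hα2 : α ≠ 2) {p q : ℝ}
    (hp : 0 ≤ p) (hq : 0 ≤ q) (hpq : p + q = 1) :
    H [p, q] * (1 - 2 ^ (1 - α)) = H [1/2, 1/2] * (1 - p ^ α - q ^ α) := by
  rcases hp.eq_or_lt with rfl | hp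
  · obtain rfl : q = 1 := by linarith
    simp [hH.pair_zero_one hα, zero_rpow hα.ne']
  rcases hq.eq_or_lt with rfl | hq
  · obtain rfl : p = 1 := by linarith
    simp [hH.pair_one_zero hα, zero_rpow hα.ne']
  have h2 : (2 : ℝ) ^ (1 - α) = 2 * (1/2) ^ α := by
    rw [rpow_sub two_pos, rpow_one, one_div, inv_rpow zero_le_two]; ring
  rw [h2]
  linear_combination
    hH.four_cell_identity hp hq hpq + (1/2 : ℝ) ^ α * hH.pair_comm hα2 hp hq hpq

end GSA

theorem stmt_6 (α : ℝ) (hα : 0 < α) (hα1 : α ≠ 1) (hα2 : α ≠ 2)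
    (H : List ℝ → ℝ) (hH : GSA α H)
    (p₁ p₂ : ℝ) (h₁ : 0 ≤ p₁) (h₂ : 0 ≤ p₂) (hsum : p₁ + p₂ = 1) :
    H [p₁, p₂] = H [1/2, 1/2] * (1 - p₁ ^ α - p₂ ^ α) / (1 - (2 : ℝ) ^ (1 - α)) := by
  have hden : 1 - (2 : ℝ) ^ (1 - α) ≠ 0 := by
    intro h
    have h0 : (2 : ℝ) ^ (1 - α) = 2 ^ (0 : ℝ) := by rw [rpow_zero]; linarith
    exact hα1 (by linarith [(rpow_right_inj two_pos (by norm_num)).mp h0])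
  rw [eq_div_iff hden]
  exact hH.mul_one_sub_two_rpow hα hα2 h₁ h₂ hsum
end

section
/- If H : Δ → ℝ satisfies generalized Shannon additivity with parameter α = 2, and D(p) := |H(p,1−p) − H(1−p,p)| for p ∈ [1/2,1], f(p) := max{(1−p)/p, 1 − (1−p)/p}, then D(p) = p²·D(f(p)) for all p ∈ [1/2,1]. -/
open Real

theorem stmt_8 (H : List ℝ → ℝ) (hH : GSA 2 H)
    (f : ℝ → ℝ) (hf : ∀ p, f p = max ((1 - p) / p) (1 - (1 - p) / p))
    (D : ℝ → ℝ) (hD : ∀ p, D p = |H [p, 1 - p] - H [1 - p, p]|)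
    (p : ℝ) (hp : p ∈ Set.Icc (1/2 : ℝ) 1) :
    D p = p ^ 2 * D (f p) := by
  obtain ⟨hp1, hp2⟩ := hp
  have hp0 : (0:ℝ) < p := by linarith
  have hs : IsStochastic ([] ++ (1-p) :: (2*p-1) :: [1-p]) := by
    constructor
    · intro x hx
      simp only [List.nil_append, List.mem_cons, List.mem_singleton, List.not_mem_nil, or_false] at hx
      rcases hx with h|h|h <;> subst h <;> linarith
    · simp; ring
  have hsum : (1-p) + (2*p-1) = p := by ring
  have h1 := hH [] [1-p] (1-p) (2*p-1) hs (by rw [hsum]; exact hp0)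
  have hs2 : IsStochastic ([1-p] ++ (2*p-1) :: (1-p) :: []) := by
    constructor
    · intro x hx
      simp only [List.cons_append, List.nil_append, List.mem_cons, List.mem_singleton, List.not_mem_nil, or_false] at hx
      rcases hx with h|h|h <;> subst h <;> linarith
    · simp; ring
  have hsum2 : (2*p-1) + (1-p) = p := by ring
  have h2 := hH [1-p] [] (2*p-1) (1-p) hs2 (by rw [hsum2]; exact hp0)
  rw [hsum] at h1
  rw [hsum2] at h2
  simp only [List.cons_append, List.nil_append] at h1 h2
  have hrp : p ^ (2:ℝ) = p ^ 2 := by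
    rw [show (2:ℝ) = ((2:ℕ):ℝ) by norm_num, Real.rpow_natCast]
  rw [hrp] at h1 h2
  have key : H [p, 1-p] - H [1-p, p]
      = p^2 * (H [(2*p-1)/p, (1-p)/p] - H [(1-p)/p, (2*p-1)/p]) := by
    linear_combination h2 - h1
  have hd : (2*p-1)/p = 1 - (1-p)/p := by field_simp; ring
  rw [hD p, hD (f p), key, hd, abs_mul, abs_of_nonneg (by positivity : (0:ℝ) ≤ p^2)]
  congr 1
  rcases le_total ((1-p)/p) (1 - (1-p)/p) with h | h
  · rw [hf p, max_eq_right h, show 1 - (1 - (1-p)/p) = (1-p)/p by ring]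
  · rw [hf p, max_eq_left h, abs_sub_comm]
end

section
/- If H : Δ → ℝ satisfies generalized Shannon additivity with α = 2 and H does not change sign on Δ₂ (i.e., H ≥ 0 on Δ₂ or H ≤ 0 on Δ₂), then H is bounded on Δ₂; indeed |H(p,1−p) − H(1−p,p)| ≤ |4H(1/2,1/2)| for all p. -/
/-
Quarter (p, q) in two ways, A = (p/2, p/2, q/2, q/2) and B = (p/2, q/2, p/2, q/2). Merging the
middle pair of each leads to the same vector (p/2, 1/2, q/2), so H(A) - H(B) = 2^(-α) (H(p, q) -
H(q, p)); merging the outer pairs instead computes H(A) and H(B) in terms of H(p, q) and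
H(1/2, 1/2). For α = 2 the resulting relation, added to its mirror image, reads
H(p, q) + H(q, p) = 8pq H(1/2, 1/2), which is at most 2 |H(1/2, 1/2)| in absolute value. When
H(p, q) and H(q, p) have the same sign, |H(p, q)| and |H(p, q) - H(q, p)| are both bounded by
|H(p, q) + H(q, p)|.
-/

open Real

section SameSign

variable {R : Type*} [CommRing R] [LinearOrder R] [IsStrictOrderedRing R] {a b : R}

lemma abs_le_abs_add_of_mul_nonneg (h : 0 ≤ a * b) : |a| ≤ |a + b| :=
  sq_le_sq.1 (by nlinarith [sq_nonneg b])

lemma abs_sub_le_abs_add_of_mul_nonneg (h : 0 ≤ a * b) : |a - b| ≤ |a + b| :=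
  sq_le_sq.1 (by nlinarith)

end SameSign

lemma one_sub_half_rpow_ne_zero {α : ℝ} (hα : α ≠ 0) : 1 - (1 / 2 : ℝ) ^ α ≠ 0 := by
  rw [sub_ne_zero, ne_comm]
  simpa using
    (rpow_right_inj (x := (1 / 2 : ℝ)) (y := α) (z := 0) (by norm_num) (by norm_num)).not.2 hα

namespace GSA

variable {α : ℝ} {H : List ℝ → ℝ}

lemma merge_halves (hH : GSA α H) (l₁ l₂ : List ℝ) {x : ℝ} (hx : 0 < x)
    (hs : IsStochastic (l₁ ++ x / 2 :: x / 2 :: l₂)) :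
    H (l₁ ++ x / 2 :: x / 2 :: l₂) = H (l₁ ++ x :: l₂) + x ^ α * H [1 / 2, 1 / 2] := by
  have h := hH l₁ l₂ (x / 2) (x / 2) hs (by positivity)
  rwa [add_halves, div_div_cancel_left' hx.ne', ← one_div] at h

lemma merge_to_half (hH : GSA α H) (l₁ l₂ : List ℝ) {p q : ℝ} (hpq : p + q = 1)
    (hs : IsStochastic (l₁ ++ p / 2 :: q / 2 :: l₂)) :
    H (l₁ ++ p / 2 :: q / 2 :: l₂) = H (l₁ ++ 1 / 2 :: l₂) + (1 / 2) ^ α * H [p, q] := by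
  have half : p / 2 + q / 2 = 1 / 2 := by linarith
  have h := hH l₁ l₂ (p / 2) (q / 2) hs (by rw [half]; norm_num)
  rwa [half, show p / 2 / (1 / 2) = p by ring, show q / 2 / (1 / 2) = q by ring] at h

lemma apply_zero_one (hH : GSA α H) (hα : α ≠ 0) : H [0, 1] = 0 := by
  have hs : IsStochastic [0, 1 / 2, 1 / 2] := ⟨by simp, by norm_num⟩
  have h₁ := hH.merge_halves [0] [] one_pos (by norm_num [hs])
  have h₂ := hH.merge_to_half [] [1 / 2] (zero_add 1) (by norm_num [hs])
  norm_num at h₁ h₂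
  refine (mul_eq_zero.1 ?_).resolve_left (one_sub_half_rpow_ne_zero hα)
  linear_combination h₂ - h₁

lemma apply_one_zero (hH : GSA α H) (hα : α ≠ 0) : H [1, 0] = 0 := by
  have hs : IsStochastic [1 / 2, 1 / 2, 0] := ⟨by simp, by norm_num⟩
  have h₁ := hH.merge_halves [] [0] one_pos (by norm_num [hs])
  have h₂ := hH.merge_to_half [1 / 2] [] (add_zero 1) (by norm_num [hs])
  norm_num at h₁ h₂
  refine (mul_eq_zero.1 ?_).resolve_left (one_sub_half_rpow_ne_zero hα)
  linear_combination h₂ - h₁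

lemma swap_relation (hH : GSA α H) {p q : ℝ} (hp : 0 < p) (hq : 0 < q) (hpq : p + q = 1) :
    (1 - 3 * (1 / 2) ^ α) * H [p, q] + (1 / 2) ^ α * H [q, p] =
      (1 - p ^ α - q ^ α) * H [1 / 2, 1 / 2] := by
  have hs₁ : IsStochastic [p / 2, p / 2, q / 2, q / 2] :=
    ⟨by simp; and_intros <;> positivity, by simp; linarith⟩
  have hs₂ : IsStochastic [p / 2, q / 2, p / 2, q / 2] :=
    ⟨by simp; and_intros <;> positivity, by simp; linarith⟩
  have hs₃ : IsStochastic [p, q / 2, q / 2] :=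
    ⟨by simp; and_intros <;> positivity, by simp; linarith⟩
  have hs₄ : IsStochastic [1 / 2, p / 2, q / 2] :=
    ⟨by simp; and_intros <;> positivity, by simp; linarith⟩
  have e₁ := hH.merge_halves [] [q / 2, q / 2] hp hs₁
  have e₂ := hH.merge_halves [p] [] hq hs₃
  have e₃ := hH.merge_to_half [p / 2] [q / 2] hpq hs₁
  have e₄ := hH.merge_to_half [] [p / 2, q / 2] hpq hs₂
  have e₅ := hH.merge_to_half [1 / 2] [] hpq hs₄
  have e₆ := hH.merge_to_half [p / 2] [q / 2] (by linarith : q + p = 1) hs₂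
  simp only [List.nil_append, List.cons_append] at e₁ e₂ e₃ e₄ e₅ e₆
  linear_combination e₃ + e₄ + e₅ - e₁ - e₂ - e₆

lemma add_swap_eq (hH : GSA 2 H) {p : ℝ} (hp : p ∈ Set.Icc (0 : ℝ) 1) :
    H [p, 1 - p] + H [1 - p, p] = 8 * p * (1 - p) * H [1 / 2, 1 / 2] := by
  obtain ⟨hp₀, hp₁⟩ := hp
  rcases hp₀.eq_or_lt with rfl | hp₀
  · norm_num [hH.apply_zero_one two_ne_zero, hH.apply_one_zero two_ne_zero]
  rcases hp₁.eq_or_lt with rfl | hp₁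
  · norm_num [hH.apply_zero_one two_ne_zero, hH.apply_one_zero two_ne_zero]
  have h := hH.swap_relation hp₀ (sub_pos.2 hp₁) (add_sub_cancel p 1)
  simp only [rpow_two] at h
  linear_combination 4 * h

lemma abs_add_swap_le (hH : GSA 2 H) {p : ℝ} (hp : p ∈ Set.Icc (0 : ℝ) 1) :
    |H [p, 1 - p] + H [1 - p, p]| ≤ |4 * H [1 / 2, 1 / 2]| := by
  have hpq : 0 ≤ 8 * p * (1 - p) := by nlinarith [hp.1, hp.2]
  rw [hH.add_swap_eq hp, abs_mul, abs_of_nonneg hpq, abs_mul 4]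
  gcongr
  norm_num
  nlinarith [sq_nonneg (2 * p - 1)]

end GSA

theorem stmt_12 (H : List ℝ → ℝ) (hH : GSA 2 H)
    (hsign : (∀ p ∈ Set.Icc (0 : ℝ) 1, 0 ≤ H [p, 1 - p]) ∨
             (∀ p ∈ Set.Icc (0 : ℝ) 1, H [p, 1 - p] ≤ 0)) :
    (∃ M : ℝ, ∀ p ∈ Set.Icc (0 : ℝ) 1, |H [p, 1 - p]| ≤ M) ∧
    ∀ p ∈ Set.Icc (0 : ℝ) 1,
      |H [p, 1 - p] - H [1 - p, p]| ≤ |4 * H [1/2, 1/2]| := by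
  have same_sign : ∀ p ∈ Set.Icc (0 : ℝ) 1, 0 ≤ H [p, 1 - p] * H [1 - p, p] := by
    intro p hp
    have hp' : 1 - p ∈ Set.Icc (0 : ℝ) 1 := ⟨by linarith [hp.2], by linarith [hp.1]⟩
    rcases hsign with hs | hs
    · have hq := hs (1 - p) hp'
      rw [sub_sub_cancel] at hq
      exact mul_nonneg (hs p hp) hq
    · have hq := hs (1 - p) hp'
      rw [sub_sub_cancel] at hq
      exact mul_nonneg_of_nonpos_of_nonpos (hs p hp) hq
  refine ⟨⟨|4 * H [1 / 2, 1 / 2]|, fun p hp => ?_⟩, fun p hp => ?_⟩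
  · exact (abs_le_abs_add_of_mul_nonneg (same_sign p hp)).trans (hH.abs_add_swap_le hp)
  · exact (abs_sub_le_abs_add_of_mul_nonneg (same_sign p hp)).trans (hH.abs_add_swap_le hp)
end

section
/- Suppose H is defined on rational stochastic vectors and satisfies generalized Shannon additivity (Suyari's axiom) with parameter α > 0, α ≠ 1. Then for all m, n ∈ ℕ: H(1/m,...,1/m) = H(1/n,...,1/n)·(1 − (1/m)^{α−1})/(1 − (1/n)^{α−1}), where n is such that (1/n)^{α−1} ≠ 1 (i.e., n ≥ 2). -/
open Real

/-- A rational stochastic vector. -/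
def IsStochasticQ (l : List ℚ) : Prop :=
  (∀ x ∈ l, 0 ≤ x) ∧ l.sum = 1

/-- Suyari's generalized Shannon additivity (grouping axiom) with parameter `α`
for a map on rational stochastic vectors: for a partition of the components of a
stochastic vector into nonempty groups, `H` of the whole vector equals `H` of the
vector of group sums plus the `pᵢ^α`-weighted sum of the entropies of the
normalized groups (a group with sum `0` contributes `0`, since `0^α = 0`). -/
def SuyariQ (α : ℝ) (H : List ℚ → ℝ) : Prop :=
  ∀ ll : List (List ℚ), (∀ g ∈ ll, g ≠ []) → (∀ g ∈ ll, ∀ x ∈ g, 0 ≤ x) →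
    (ll.flatten).sum = 1 →
    H ll.flatten = H (ll.map List.sum) +
      (ll.map fun g => ((g.sum : ℝ)) ^ α * H (g.map fun x => x / g.sum)).sum

lemma flat_rep (a b : ℕ) (c : ℚ) :
    (List.replicate a (List.replicate b c)).flatten = List.replicate (a * b) c := by
  induction a with
  | zero => simp
  | succ k ih =>
      rw [List.replicate_succ, List.flatten_cons, ih, Nat.succ_mul, Nat.add_comm,
        List.replicate_add]

lemma uniform_mul (α : ℝ) (H : List ℚ → ℝ) (hH : SuyariQ α H)
    (a b : ℕ) (ha : 1 ≤ a) (hb : 1 ≤ b) :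
    H (List.replicate (a * b) (((a * b : ℕ) : ℚ)⁻¹)) =
      H (List.replicate a ((a : ℚ)⁻¹)) +
        ((a : ℝ)⁻¹) ^ (α - 1) * H (List.replicate b ((b : ℚ)⁻¹)) := by
  have haQ : ((a : ℚ)) ≠ 0 := by positivity
  have hbQ : ((b : ℚ)) ≠ 0 := by positivity
  set c : ℚ := ((a * b : ℕ) : ℚ)⁻¹ with hc
  have hcpos : 0 ≤ c := by positivity
  have key := hH (List.replicate a (List.replicate b c)) ?_ ?_ ?_
  · rw [flat_rep] at key
    simp only [List.map_replicate, List.sum_replicate, nsmul_eq_mul] at key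
    have hbc : (b : ℚ) * c = (a : ℚ)⁻¹ := by
      rw [hc]; push_cast; field_simp
    have hnorm : c / ((b : ℚ) * c) = (b : ℚ)⁻¹ := by
      rw [hc]; push_cast; field_simp
    rw [hnorm, hbc] at key
    rw [key]
    congr 1
    push_cast
    rw [Real.rpow_sub (by positivity), Real.rpow_one]
    field_simp
  · intro g hg
    rw [List.eq_of_mem_replicate hg]
    intro h
    have := congrArg List.length h
    simp at this
    omega
  · intro g hg x hx
    rw [List.eq_of_mem_replicate hg] at hx
    rw [List.eq_of_mem_replicate hx]
    exact hcpos
  · rw [flat_rep, List.sum_replicate, nsmul_eq_mul, hc]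
    have : ((a*b : ℕ) : ℚ) ≠ 0 := by positivity
    field_simp

theorem stmt_15 (α : ℝ) (hα : 0 < α) (hα1 : α ≠ 1)
    (H : List ℚ → ℝ) (hH : SuyariQ α H)
    (m n : ℕ) (hm : 1 ≤ m) (hn : 2 ≤ n) :
    H (List.replicate m ((m : ℚ)⁻¹)) =
      H (List.replicate n ((n : ℚ)⁻¹)) *
        (1 - ((m : ℝ)⁻¹) ^ (α - 1)) / (1 - ((n : ℝ)⁻¹) ^ (α - 1)) := by
  have h1 := uniform_mul α H hH m n hm (by omega)
  have h2 := uniform_mul α H hH n m (by omega) hm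
  rw [Nat.mul_comm n m] at h2
  rw [h1] at h2
  have hy : ((n : ℝ)⁻¹) ^ (α - 1) ≠ 1 := by
    have hn1 : (1:ℝ) < (n : ℝ) := by exact_mod_cast hn
    have hb : (0:ℝ) < (n : ℝ)⁻¹ := by positivity
    rw [Real.rpow_def_of_pos hb]
    intro h
    have := Real.exp_injective (h.trans Real.exp_zero.symm)
    have hlog : Real.log ((n:ℝ)⁻¹) ≠ 0 := by
      rw [Real.log_inv, neg_ne_zero]
      exact ne_of_gt (Real.log_pos hn1)
    exact mul_ne_zero hlog (sub_ne_zero.mpr hα1) this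
  have hy' : 1 - ((n : ℝ)⁻¹) ^ (α - 1) ≠ 0 := by
    intro h; apply hy; linarith [sub_eq_zero.mp h]
  rw [eq_div_iff hy']
  linear_combination h2
end
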